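/- Let g be a convex function on an interval [α, β] and let ρ be a positive (nonnegative) finite measure on [α, β] with ρ([α,β]) > 0. Let α ≤ α' < β' ≤ β with ρ([α',β']) > 0, and suppose that ( ∫_α^β x dρ(x) / ρ([α,β]) − ∫_{α'}^{β'} x dρ(x) / ρ([α',β']) ) · ( g(β') − g(α') ) ≥ 0. Then ∫_α^β g(x) dρ(x) / ρ([α,β]) ≥ ∫_{α'}^{β'} g(x) dρ(x) / ρ([α',β']). -/

import Mathlib

open MeasureTheory Set

/-- Lemma 11: let `g` be convex on `[α,β]` and `ρ` a finite nonnegative measure with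
`ρ([α,β]) > 0`. Let `α ≤ α' < β' ≤ β` with `ρ([α',β']) > 0` and suppose
`(avg of x over [α,β] − avg of x over [α',β']) · (g(β') − g(α')) ≥ 0`. Then the
`ρ`-average of `g` over `[α,β]` is at least its `ρ`-average over `[α',β']`. -/
theorem average_convex_ge_of_moment_condition
    (α β α' β' : ℝ) (g : ℝ → ℝ)
    (hconv : ConvexOn ℝ (Set.Icc α β) g)
    (ρ : Measure ℝ) [IsFiniteMeasure ρ]
    (hαα' : α ≤ α') (hα'β' : α' < β') (hβ'β : β' ≤ β)
    (hρpos : 0 < ρ (Set.Icc α β)) (hρpos' : 0 < ρ (Set.Icc α' β'))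
    (hgint : IntegrableOn g (Set.Icc α β) ρ)
    (hxint : IntegrableOn (fun x => x) (Set.Icc α β) ρ)
    (hmom : ((∫ x in Set.Icc α β, x ∂ρ) / (ρ (Set.Icc α β)).toReal -
        (∫ x in Set.Icc α' β', x ∂ρ) / (ρ (Set.Icc α' β')).toReal) * (g β' - g α') ≥ 0) :
    (∫ x in Set.Icc α β, g x ∂ρ) / (ρ (Set.Icc α β)).toReal ≥
      (∫ x in Set.Icc α' β', g x ∂ρ) / (ρ (Set.Icc α' β')).toReal := by
  set A := Set.Icc α β with hA
  set B := Set.Icc α' β' with hB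
  have hBA : B ⊆ A := Set.Icc_subset_Icc hαα' hβ'β
  have hα'A : α' ∈ A := ⟨hαα', hα'β'.le.trans hβ'β⟩
  have hβ'A : β' ∈ A := ⟨hαα'.trans hα'β'.le, hβ'β⟩
  have hba' : (0:ℝ) < β' - α' := sub_pos.2 hα'β'
  set s : ℝ := (g β' - g α') / (β' - α') with hs
  -- chord upper bound on B
  have hub : ∀ x ∈ B, g x ≤ g α' + s * (x - α') := by
    intro x hx
    obtain ⟨hx1, hx2⟩ := hx
    set t : ℝ := (x - α') / (β' - α') with ht
    have ht0 : 0 ≤ t := div_nonneg (by linarith) hba'.le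
    have ht1 : t ≤ 1 := (div_le_one hba').2 (by linarith)
    have hxt : x = (1 - t) * α' + t * β' := by
      have h := div_mul_cancel₀ (x - α') hba'.ne'
      rw [← ht] at h
      linear_combination -h
    have := hconv.2 hα'A hβ'A (by linarith : (0:ℝ) ≤ 1 - t) ht0 (by ring)
    rw [smul_eq_mul, smul_eq_mul, smul_eq_mul, smul_eq_mul] at this
    rw [← hxt] at this
    have hst : s * (x - α') = t * (g β' - g α') := by
      rw [hs, ht]; field_simp
    calc g x ≤ (1 - t) * g α' + t * g β' := this
      _ = g α' + t * (g β' - g α') := by ring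
      _ = g α' + s * (x - α') := by rw [hst]
  -- chord lower bound outside B
  have hlb : ∀ x ∈ A \ B, g α' + s * (x - α') ≤ g x := by
    intro x ⟨hxA, hxB⟩
    rcases lt_or_ge x α' with hx | hge
    · -- x < α'
      have hx : x < α' := hx
      have hsec := hconv.secant_mono hβ'A hxA hα'A (by linarith) (by linarith) (by linarith)
      -- (g x - g β')/(x - β') ≤ (g α' - g β')/(α' - β')
      have h2 : (g α' - g β') / (α' - β') = s := by
        rw [hs]; rw [div_eq_div_iff (by linarith) (by linarith)]; ring
      rw [h2] at hsec
      have hxβ : x - β' < 0 := by linarith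
      have := (div_le_iff_of_neg hxβ).1 hsec
      -- g x - g β' ≥ s * (x - β')
      have hsβ : s * (β' - α') = g β' - g α' := by
        rw [hs]; field_simp
      nlinarith [this]
    · -- β' < x
      have hx : β' < x := lt_of_not_ge fun hle => hxB (Set.mem_Icc.2 ⟨hge, hle⟩)
      have hsec := hconv.secant_mono hα'A hβ'A hxA (by linarith) (by linarith) (by linarith)
      rw [← hs] at hsec
      have hxα : 0 < x - α' := by linarith
      have := (le_div_iff₀ hxα).1 hsec
      linarith
  -- measure arithmetic
  have hmA : MeasurableSet A := measurableSet_Icc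
  have hmB : MeasurableSet B := measurableSet_Icc
  have hmD : MeasurableSet (A \ B) := hmA.diff hmB
  set a := (ρ A).toReal with haa
  set b := (ρ B).toReal with hbb
  have ha : 0 < a := ENNReal.toReal_pos hρpos.ne' (measure_ne_top ρ A)
  have hb : 0 < b := ENNReal.toReal_pos hρpos'.ne' (measure_ne_top ρ B)
  have hdiff : (ρ (A \ B)).toReal = a - b := by
    rw [measure_diff hBA hmB.nullMeasurableSet (measure_ne_top ρ B)]
    rw [ENNReal.toReal_sub_of_le (measure_mono hBA) (measure_ne_top ρ A)]
  -- integrability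
  have hgB : IntegrableOn g B ρ := hgint.mono_set hBA
  have hgD : IntegrableOn g (A \ B) ρ := hgint.mono_set Set.diff_subset
  have hxB : IntegrableOn (fun x => x) B ρ := hxint.mono_set hBA
  have hxD : IntegrableOn (fun x => x) (A \ B) ρ := hxint.mono_set Set.diff_subset
  set m : ℝ := (∫ x in B, g x ∂ρ) / b with hm
  set μA : ℝ := (∫ x in A, x ∂ρ) / a with hμA
  set μB : ℝ := (∫ x in B, x ∂ρ) / b with hμB
  -- split integrals over A
  have hsplitg : ∫ x in A, g x ∂ρ = (∫ x in B, g x ∂ρ) + ∫ x in A \ B, g x ∂ρ := by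
    rw [← MeasureTheory.setIntegral_union (Set.disjoint_sdiff_right) hmD hgB hgD,
      Set.union_diff_cancel hBA]
  have hsplitx : ∫ x in A, x ∂ρ = (∫ x in B, x ∂ρ) + ∫ x in A \ B, x ∂ρ := by
    rw [← MeasureTheory.setIntegral_union (Set.disjoint_sdiff_right) hmD hxB hxD,
      Set.union_diff_cancel hBA]
  -- m ≤ ℓ(μB)
  have hmle : m ≤ g α' + s * (μB - α') := by
    have hint : ∫ x in B, g x ∂ρ ≤ ∫ x in B, (g α' + s * (x - α')) ∂ρ := by
      apply setIntegral_mono_on hgB _ hmB hub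
      have : (fun x : ℝ => g α' + s * (x - α')) = fun x => (g α' - s * α') + s * x := by
        funext x; ring
      rw [this]
      exact (integrable_const _).add (hxB.const_mul s)
    have heval : ∫ x in B, (g α' + s * (x - α')) ∂ρ
        = b * (g α' - s * α') + s * ∫ x in B, x ∂ρ := by
      have h1 : (fun x : ℝ => g α' + s * (x - α')) = fun x => (g α' - s * α') + s * x := by
        funext x; ring
      rw [h1, MeasureTheory.integral_add (integrable_const _) (hxB.const_mul s),
        MeasureTheory.integral_const, MeasureTheory.integral_const_mul,
        measureReal_restrict_apply_univ, Measure.real, smul_eq_mul]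
    rw [heval] at hint
    rw [hm, hμB, div_le_iff₀ hb]
    have heq : (g α' + s * ((∫ x in B, x ∂ρ) / b - α')) * b
        = b * (g α' - s * α') + s * ∫ x in B, x ∂ρ := by
      field_simp
      ring
    rw [heq]
    exact hint
  -- lower bound on diff integral
  have hkey : ∫ x in A \ B, (m + s * (x - μB)) ∂ρ ≤ ∫ x in A \ B, g x ∂ρ := by
    apply setIntegral_mono_on _ hgD hmD
    · intro x hx
      have h1 := hlb x hx
      have : m + s * (x - μB) ≤ g α' + s * (x - α') := by nlinarith [hmle]
      linarith
    · have : (fun x : ℝ => m + s * (x - μB)) = fun x => (m - s * μB) + s * x := by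
        funext x; ring
      rw [this]
      exact (integrable_const _).add (hxD.const_mul s)
  have hevalD : ∫ x in A \ B, (m + s * (x - μB)) ∂ρ
      = (a - b) * (m - s * μB) + s * ∫ x in A \ B, x ∂ρ := by
    have h1 : (fun x : ℝ => m + s * (x - μB)) = fun x => (m - s * μB) + s * x := by
      funext x; ring
    rw [h1, MeasureTheory.integral_add (integrable_const _) (hxD.const_mul s),
      MeasureTheory.integral_const, MeasureTheory.integral_const_mul,
      measureReal_restrict_apply_univ, Measure.real, smul_eq_mul, hdiff]
  -- the moment condition gives s * (μA - μB) ≥ 0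
  have hsm : 0 ≤ s * (μA - μB) := by
    have : s * (μA - μB) = ((μA - μB) * (g β' - g α')) / (β' - α') := by
      rw [hs]; ring
    rw [this]
    exact div_nonneg hmom hba'.le
  -- assemble
  have hxDint : ∫ x in A \ B, x ∂ρ = a * μA - b * μB := by
    rw [hμA, hμB]
    field_simp
    linarith [hsplitx]
  have hfinal : a * m ≤ ∫ x in A, g x ∂ρ := by
    have hBg : ∫ x in B, g x ∂ρ = b * m := by rw [hm]; field_simp
    rw [hsplitg, hBg]
    have := hkey
    rw [hevalD, hxDint] at this
    nlinarith [this, hsm, ha]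
  rw [ge_iff_le, le_div_iff₀ ha]
  linarith [hfinal]
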